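/- Cauchy–Schwarz bound for uniform integrability: if (X_n) is bounded in L², i.e., for each φ there is M_φ with q_φ(X_n) := (φ(F(|X_n|²)))^{1/2} ≤ M_φ for all n, and if q_φ(P_{(|X_n| > λe)} e) → 0 uniformly in n as λ → ∞ for each φ, then (X_n) is L¹-uniformly integrable, via the inequality p_φ(P|X_n|) ≤ q_φ(Pe)·q_φ(X_n) for any band projection P. -/

import Mathlib

variable {E : Type*} [CommRing E] [Lattice E]
  [CovariantClass E E (· + ·) (· ≤ ·)] [Algebra ℝ E]

/-- `E` is Dedekind complete. -/
def DedekindComplete (E : Type*) [AddCommGroup E] [Lattice E] : Prop :=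
  ∀ A : Set E, A.Nonempty → BddAbove A → ∃ s, IsLUB A s

/-- `e` is a weak order unit. -/
def IsWeakUnit (e : E) : Prop :=
  0 < e ∧ ∀ x : E, 0 ≤ x → IsLUB (Set.range fun n : ℕ => x ⊓ n • e) x

/-- A band (order) projection. -/
def IsBandProj (P : E →ₗ[ℝ] E) : Prop :=
  (∀ x, P (P x) = P x) ∧ ∀ x : E, 0 ≤ x → 0 ≤ P x ∧ P x ≤ x

/-- `P` is the band projection onto the band generated by `u ≥ 0`. -/
def IsProjOnBandGen (P : E →ₗ[ℝ] E) (u : E) : Prop :=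
  IsBandProj P ∧ ∀ x : E, 0 ≤ x → IsLUB (Set.range fun n : ℕ => x ⊓ n • u) (P x)

/-- A conditional expectation with respect to the weak order unit `e`. -/
def IsCondExp (e : E) (F : E →ₗ[ℝ] E) : Prop :=
  (∀ x, F (F x) = F x) ∧ (∀ x : E, 0 < x → 0 < F x) ∧ F e = e ∧
  ∀ V : ℕ → E, Antitone V → IsGLB (Set.range V) 0 →
    IsGLB (Set.range fun n => F (V n)) 0

/-- A positive, normalized, order continuous functional. -/
def IsNormedFunctional (e : E) (φ : E →ₗ[ℝ] ℝ) : Prop :=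
  (∀ x : E, 0 ≤ x → 0 ≤ φ x) ∧ φ e = 1 ∧
  ∀ V : ℕ → E, Antitone V → IsGLB (Set.range V) 0 →
    Filter.Tendsto (fun n => φ (V n)) Filter.atTop (nhds 0)

/-- `Φ` is a separating family of normalized positive order continuous functionals. -/
def IsSeparatingFamily (e : E) (Φ : Set (E →ₗ[ℝ] ℝ)) : Prop :=
  (∀ φ ∈ Φ, IsNormedFunctional e φ) ∧ ∀ x : E, (∀ φ ∈ Φ, φ x = 0) → x = 0

/-- `L¹`-uniform integrability. -/
def UnifInt (F : E →ₗ[ℝ] E) (Φ : Set (E →ₗ[ℝ] ℝ)) (X : ℕ → E)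
    (P : ℕ → ℝ → (E →ₗ[ℝ] E)) : Prop :=
  ∀ φ ∈ Φ, ∀ ε : ℝ, 0 < ε → ∃ l₀ : ℝ, ∀ l : ℝ, l₀ ≤ l → ∀ n : ℕ,
    φ (F (P n l |X n|)) < ε

/-- The `L²`-seminorm `q_φ(X) = (φ(F(|X|²)))^{1/2}`, the square taken in the
`f`-algebra structure of `E` (with unit `1`). -/
noncomputable def qSemi (F : E →ₗ[ℝ] E) (φ : E →ₗ[ℝ] ℝ) (X : E) : ℝ :=
  Real.sqrt (φ (F (|X| * |X|)))

/-! The truncation `y = Y ⊓ k • 1` of `Y = |X|` lies in the order ideal generated by `1`. There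
squares are nonnegative, because the positive and negative parts of an element are disjoint and bounded
and so have product zero; hence the positive functional `φ ∘ F` satisfies the Cauchy–Schwarz
inequality, and `P y ≤ P 1 * y` since `P y` is disjoint from `1 - P 1`. This gives
`φ (F (P Y)) ≤ q_φ(P 1) q_φ(X) + φ (F (Y - Y ⊓ k • 1))`, and order continuity of `φ ∘ F` removes
the error term as `k → ∞`. A bound `q_φ(X n) ≤ M` then turns the uniform smallness of
`q_φ(P n l 1)` into uniform integrability. -/

open Filter Topology

section LatticeOrderedGroup

variable {α : Type*} [Lattice α] [AddCommGroup α] [AddLeftMono α]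

theorem add_inf_le_inf_add_inf {a b d : α} (ha : 0 ≤ a) (hb : 0 ≤ b) (hd : 0 ≤ d) :
    (a + b) ⊓ d ≤ a ⊓ d + b ⊓ d := by
  have hleft : (a + b) ⊓ d ≤ a + b ⊓ d := by
    rw [add_inf]
    exact inf_le_inf_left _ (le_add_of_nonneg_left ha)
  have hright : (a + b) ⊓ d ≤ d + b ⊓ d :=
    inf_le_right.trans (le_add_of_nonneg_right (le_inf hb hd))
  calc (a + b) ⊓ d ≤ (a + b ⊓ d) ⊓ (d + b ⊓ d) := le_inf hleft hright
    _ = a ⊓ d + b ⊓ d := by rw [← inf_add]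

theorem nsmul_inf_eq_zero {a d : α} (ha : 0 ≤ a) (hd : 0 ≤ d) (h : a ⊓ d = 0) (m : ℕ) :
    (m • a) ⊓ d = 0 := by
  induction m with
  | zero => simpa using hd
  | succ m ih =>
    refine le_antisymm ?_ (le_inf (nsmul_nonneg ha _) hd)
    calc ((m + 1) • a) ⊓ d ≤ (m • a) ⊓ d + a ⊓ d := by
          rw [succ_nsmul]; exact add_inf_le_inf_add_inf (nsmul_nonneg ha m) ha hd
      _ = 0 := by rw [ih, h, add_zero]

theorem inf_nonpos_of_isLUB {f : ℕ → α} {s d : α} (hs : IsLUB (Set.range f) s)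
    (h : ∀ m, d ⊓ f m ≤ 0) : d ⊓ s ≤ 0 := by
  have hbound : ∀ m, f m ≤ s - d ⊓ s := fun m => by
    have hfm : f m ≤ s := hs.1 ⟨m, rfl⟩
    have hlip : d ⊓ s ≤ d ⊓ f m + (s - f m) := by
      rw [inf_add, add_sub_cancel]
      exact inf_le_inf_right _ (le_add_of_nonneg_right (sub_nonneg.2 hfm))
    have : d ⊓ s ≤ s - f m := hlip.trans <| by simpa using add_le_add_right (h m) (s - f m)
    exact le_sub_comm.1 this
  have := hs.2 (Set.forall_mem_range.2 hbound)
  rwa [le_sub_self_iff] at this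

theorem isGLB_range_sub_of_isLUB {f : ℕ → α} {s : α} (hs : IsLUB (Set.range f) s) :
    IsGLB (Set.range fun k => s - f k) 0 := by
  refine ⟨Set.forall_mem_range.2 fun k => sub_nonneg.2 (hs.1 ⟨k, rfl⟩), fun b hb => ?_⟩
  have : s ≤ s - b := hs.2 <| Set.forall_mem_range.2 fun k =>
    le_sub_comm.1 (hb ⟨k, rfl⟩)
  exact (le_sub_self_iff s).1 this

theorem antitone_sub_inf_nsmul {e : α} (he : 0 ≤ e) (Y : α) :
    Antitone fun k : ℕ => Y - Y ⊓ k • e :=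
  fun _ _ hkl => sub_le_sub_left (inf_le_inf_left Y (nsmul_le_nsmul_left he hkl)) Y

variable (α) in
def boundedSubgroup (e : α) : AddSubgroup α where
  carrier := {x | ∃ k : ℕ, |x| ≤ k • e}
  add_mem' := by
    rintro x y ⟨k, hk⟩ ⟨l, hl⟩
    exact ⟨k + l, (abs_add_le x y).trans (add_nsmul e k l ▸ add_le_add hk hl)⟩
  zero_mem' := ⟨0, by simp⟩
  neg_mem' := by
    rintro x ⟨k, hk⟩
    exact ⟨k, (abs_neg x).le.trans hk⟩

theorem mem_boundedSubgroup_of_nonneg_of_le {e x : α} {k : ℕ} (hx : 0 ≤ x) (hk : x ≤ k • e) :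
    x ∈ boundedSubgroup α e :=
  ⟨k, (abs_of_nonneg hx).le.trans hk⟩

end LatticeOrderedGroup

section LatticeOrderedRing

variable {R : Type*} [CommRing R] [Lattice R] [IsOrderedRing R]

theorem IsWeakUnit.isGLB_range_sub_inf_nsmul {e : R} (he : IsWeakUnit e) {Y : R} (hY : 0 ≤ Y) :
    IsGLB (Set.range fun k : ℕ => Y - Y ⊓ k • e) 0 :=
  isGLB_range_sub_of_isLUB (he.2 Y hY)

theorem mul_eq_zero_of_inf_eq_zero {a b : R} {k l : ℕ} (ha : 0 ≤ a) (hb : 0 ≤ b)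
    (hab : a ⊓ b = 0) (hak : a ≤ k • 1) (hbl : b ≤ l • 1) : a * b = 0 := by
  have hle_b : a * b ≤ k • b := by
    simpa using mul_le_mul_of_nonneg_right hak hb
  have hle_a : a * b ≤ l • a := by
    simpa [mul_comm] using mul_le_mul_of_nonneg_left hbl ha
  have hdisj : (k • b) ⊓ (l • a) = 0 := by
    have hab' : (l • a) ⊓ b = 0 := nsmul_inf_eq_zero ha hb hab l
    rw [inf_comm] at hab'
    exact nsmul_inf_eq_zero hb (nsmul_nonneg ha l) hab' k
  exact le_antisymm (hdisj ▸ le_inf hle_b hle_a) (mul_nonneg ha hb)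

theorem mul_self_nonneg_of_mem_boundedSubgroup {x : R} (hx : x ∈ boundedSubgroup R 1) :
    0 ≤ x * x := by
  obtain ⟨k, hk⟩ := hx
  rw [← posPart_add_negPart] at hk
  have hpos : x⁺ ≤ k • 1 := (le_add_of_nonneg_right (negPart_nonneg x)).trans hk
  have hneg : x⁻ ≤ k • 1 := (le_add_of_nonneg_left (posPart_nonneg x)).trans hk
  have hzero : x⁺ * x⁻ = 0 := mul_eq_zero_of_inf_eq_zero (posPart_nonneg x) (negPart_nonneg x)
    (posPart_inf_negPart_eq_zero x) hpos hneg
  have hsq : x * x = x⁺ * x⁺ + x⁻ * x⁻ - 2 * (x⁺ * x⁻) := by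
    conv_lhs => rw [← posPart_sub_negPart x]
    ring
  rw [hsq, hzero, mul_zero, sub_zero]
  exact add_nonneg (mul_nonneg (posPart_nonneg x) (posPart_nonneg x))
    (mul_nonneg (negPart_nonneg x) (negPart_nonneg x))

theorem sq_le_mul_of_forall_int_nonneg {A B C : ℝ}
    (h : ∀ a b : ℤ, 0 ≤ A * a ^ 2 - 2 * B * a * b + C * b ^ 2) : B ^ 2 ≤ A * C := by
  have hrat : ∀ q : ℚ, 0 ≤ A * ((q : ℝ) * q) + -(2 * B) * q + C := fun q => by
    have hden : (0 : ℝ) < q.den := by exact_mod_cast q.pos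
    have hq : (q : ℝ) = q.num / q.den := by exact_mod_cast (Rat.num_div_den q).symm
    have hscale : A * ((q : ℝ) * q) + -(2 * B) * q + C
        = (A * q.num ^ 2 - 2 * B * q.num * q.den + C * (q.den : ℤ) ^ 2) / (q.den : ℝ) ^ 2 := by
      rw [hq]; field_simp; push_cast; ring
    rw [hscale]
    exact div_nonneg (h _ _) (sq_nonneg _)
  have hreal : ∀ t : ℝ, 0 ≤ A * (t * t) + -(2 * B) * t + C := fun t =>
    Rat.denseRange_cast.induction_on t (isClosed_le continuous_const (by fun_prop)) hrat
  have := discrim_le_zero hreal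
  rw [discrim] at this
  linarith

/- Real scalars need not act monotonically on `R`, so the quadratic form `t ↦ ψ ((t • c - y) ^ 2)`
is only known to be nonnegative at integer points. -/
theorem sq_apply_mul_le_of_monotone {ψ : R →+ ℝ} (hψ : Monotone ψ) {c y : R}
    (hc : c ∈ boundedSubgroup R 1) (hy : y ∈ boundedSubgroup R 1) :
    ψ (c * y) ^ 2 ≤ ψ (c * c) * ψ (y * y) := by
  refine sq_le_mul_of_forall_int_nonneg fun a b => ?_
  have hz : a • c - b • y ∈ boundedSubgroup R 1 :=
    sub_mem (zsmul_mem hc a) (zsmul_mem hy b)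
  have hexpand : (a • c - b • y) * (a • c - b • y)
      = (a ^ 2) • (c * c) - (2 * a * b) • (c * y) + (b ^ 2) • (y * y) := by
    simp only [zsmul_eq_mul]; push_cast; ring
  have := (monotone_iff_map_nonneg ψ).1 hψ _ (mul_self_nonneg_of_mem_boundedSubgroup hz)
  rw [hexpand, map_add, map_sub, map_zsmul, map_zsmul, map_zsmul] at this
  simp only [zsmul_eq_mul] at this
  push_cast at this
  linarith

theorem apply_mul_le_sqrt_mul_sqrt_of_monotone {ψ : R →+ ℝ} (hψ : Monotone ψ) {c y : R}
    (hc : c ∈ boundedSubgroup R 1) (hy : y ∈ boundedSubgroup R 1) :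
    ψ (c * y) ≤ √(ψ (c * c)) * √(ψ (y * y)) := by
  have hcc := (monotone_iff_map_nonneg ψ).1 hψ _ (mul_self_nonneg_of_mem_boundedSubgroup hc)
  rw [← Real.sqrt_mul hcc]
  exact (le_abs_self _).trans (Real.abs_le_sqrt (sq_apply_mul_le_of_monotone hψ hc hy))

end LatticeOrderedRing

section BandProjection

variable {R : Type*} [CommRing R] [Lattice R] [IsOrderedRing R] [Algebra ℝ R]
  {P : R →ₗ[ℝ] R} {u : R}

theorem IsProjOnBandGen.sub_apply_inf_eq_zero (hP : IsProjOnBandGen P u) (hu : 0 ≤ u) {x : R}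
    (hx : 0 ≤ x) : (x - P x) ⊓ u = 0 := by
  set s := (x - P x) ⊓ u
  have hlub := hP.2 x hx
  have hbound : ∀ m : ℕ, x ⊓ m • u ≤ P x - s := fun m => by
    refine le_sub_iff_add_le.2 (le_trans (le_inf ?_ ?_) (hlub.1 ⟨m + 1, rfl⟩))
    · calc x ⊓ m • u + s ≤ x ⊓ m • u + (x - P x) := add_le_add_right inf_le_left _
        _ ≤ x ⊓ m • u + (x - x ⊓ m • u) :=
            add_le_add_right (sub_le_sub_left (hlub.1 ⟨m, rfl⟩) x) _
        _ = x := add_sub_cancel _ _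
    · rw [succ_nsmul]
      exact add_le_add inf_le_right inf_le_right
  have hs : s ≤ 0 := by
    simpa using hlub.2 (Set.forall_mem_range.2 hbound)
  exact le_antisymm hs (le_inf (sub_nonneg.2 (hP.1.2 x hx).2) hu)

theorem IsProjOnBandGen.apply_inf_eq_zero (hP : IsProjOnBandGen P u) (hu : 0 ≤ u) {d : R}
    (hd : 0 ≤ d) (hdu : d ⊓ u = 0) {y : R} (hy : 0 ≤ y) : P y ⊓ d = 0 := by
  have hm : ∀ m : ℕ, d ⊓ (y ⊓ m • u) ≤ 0 := fun m => by
    have := nsmul_inf_eq_zero hu hd (inf_comm d u ▸ hdu) m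
    rw [inf_comm] at this
    exact this ▸ inf_le_inf_left d inf_le_right
  refine le_antisymm ?_ (le_inf (hP.1.2 y hy).1 hd)
  rw [inf_comm]
  exact inf_nonpos_of_isLUB (hP.2 y hy) hm

theorem IsProjOnBandGen.apply_le_apply_one_mul (hP : IsProjOnBandGen P u) (hu : 0 ≤ u)
    {y : R} {k : ℕ} (hy : 0 ≤ y) (hyk : y ≤ k • 1) : P y ≤ P 1 * y := by
  obtain ⟨hP1, hP1le⟩ := hP.1.2 1 zero_le_one
  obtain ⟨hPy, hPyle⟩ := hP.1.2 y hy
  have hcompl : 0 ≤ 1 - P 1 := sub_nonneg.2 hP1le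
  have hdisj : P y ⊓ (1 - P 1) = 0 :=
    hP.apply_inf_eq_zero hu hcompl (hP.sub_apply_inf_eq_zero hu zero_le_one) hy
  have hzero : P y * (1 - P 1) = 0 := mul_eq_zero_of_inf_eq_zero (l := 1) hPy hcompl hdisj
    (hPyle.trans hyk) (by simpa using sub_le_self 1 hP1)
  calc P y = P y * P 1 := by rwa [mul_sub, mul_one, sub_eq_zero] at hzero
    _ ≤ y * P 1 := mul_le_mul_of_nonneg_right hPyle hP1
    _ = P 1 * y := mul_comm _ _

theorem IsProjOnBandGen.apply_le_sqrt_mul_sqrt (hP : IsProjOnBandGen P u) (hu : 0 ≤ u)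
    (h1 : IsWeakUnit (1 : R)) {ψ : R →+ ℝ} (hψ : Monotone ψ)
    (hcont : ∀ V : ℕ → R, Antitone V → IsGLB (Set.range V) 0 →
      Tendsto (fun k => ψ (V k)) atTop (𝓝 0))
    {Y : R} (hY : 0 ≤ Y) : ψ (P Y) ≤ √(ψ (P 1 * P 1)) * √(ψ (Y * Y)) := by
  obtain ⟨hP1, hP1le⟩ := hP.1.2 1 zero_le_one
  have hP1mem : P 1 ∈ boundedSubgroup R 1 :=
    mem_boundedSubgroup_of_nonneg_of_le (k := 1) hP1 (by simpa using hP1le)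
  have htrunc : ∀ k : ℕ, ψ (P Y) ≤ √(ψ (P 1 * P 1)) * √(ψ (Y * Y)) + ψ (Y - Y ⊓ k • 1) := by
    intro k
    set y := Y ⊓ k • (1 : R)
    have hy : 0 ≤ y := le_inf hY (nsmul_nonneg zero_le_one k)
    have hyY : y ≤ Y := inf_le_left
    have hyy : ψ (y * y) ≤ ψ (Y * Y) := hψ (mul_le_mul hyY hyY hy hY)
    have hhead : ψ (P y) ≤ √(ψ (P 1 * P 1)) * √(ψ (Y * Y)) :=
      calc ψ (P y) ≤ ψ (P 1 * y) := hψ (hP.apply_le_apply_one_mul hu hy inf_le_right)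
        _ ≤ √(ψ (P 1 * P 1)) * √(ψ (y * y)) := apply_mul_le_sqrt_mul_sqrt_of_monotone hψ
            hP1mem (mem_boundedSubgroup_of_nonneg_of_le hy inf_le_right)
        _ ≤ √(ψ (P 1 * P 1)) * √(ψ (Y * Y)) := by gcongr
    have htail : ψ (P (Y - y)) ≤ ψ (Y - y) := hψ (hP.1.2 _ (sub_nonneg.2 hyY)).2
    calc ψ (P Y) = ψ (P y) + ψ (P (Y - y)) := by rw [← map_add, ← map_add, add_sub_cancel]
      _ ≤ _ := add_le_add hhead htail
  have hlim := hcont _ (antitone_sub_inf_nsmul zero_le_one Y) (h1.isGLB_range_sub_inf_nsmul hY)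
  exact le_of_tendsto_of_tendsto' tendsto_const_nhds (by simpa using hlim.const_add _) htrunc

end BandProjection

section CondExp

variable {R : Type*} [CommRing R] [Lattice R] [IsOrderedRing R] [Algebra ℝ R]
  {F : R →ₗ[ℝ] R} {φ : R →ₗ[ℝ] ℝ}

theorem IsCondExp.monotone {e : R} (hF : IsCondExp e F) : Monotone F :=
  (monotone_iff_map_nonneg F).2 fun x hx => by
    rcases hx.lt_or_eq with hx | rfl
    · exact (hF.2.1 x hx).le
    · rw [map_zero]

theorem IsNormedFunctional.monotone {e : R} (hφ : IsNormedFunctional e φ) : Monotone φ :=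
  (monotone_iff_map_nonneg φ).2 hφ.1

theorem IsNormedFunctional.tendsto_comp_condExp {e : R} (hφ : IsNormedFunctional e φ)
    (hF : IsCondExp e F) {V : ℕ → R} (hV : Antitone V) (h0 : IsGLB (Set.range V) 0) :
    Tendsto (fun k => φ (F (V k))) atTop (𝓝 0) :=
  hφ.2.2 _ (hF.monotone.comp_antitone hV) (hF.2.2.2 V hV h0)

theorem IsProjOnBandGen.apply_abs_le_qSemi_mul_qSemi {P : R →ₗ[ℝ] R} {u : R}
    (hP : IsProjOnBandGen P u) (hu : 0 ≤ u) (h1 : IsWeakUnit (1 : R)) (hF : IsCondExp 1 F)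
    (hφ : IsNormedFunctional 1 φ) (X : R) :
    φ (F (P |X|)) ≤ qSemi F φ (P 1) * qSemi F φ X := by
  rw [qSemi, qSemi, abs_of_nonneg (hP.1.2 1 zero_le_one).1]
  exact hP.apply_le_sqrt_mul_sqrt hu h1 (ψ := (φ ∘ₗ F).toAddMonoidHom)
    (hφ.monotone.comp hF.monotone) (fun _ => hφ.tendsto_comp_condExp hF) (abs_nonneg X)

end CondExp

theorem unifInt_of_L2_bounded
    (hmul : ∀ x y : E, 0 ≤ x → 0 ≤ y → 0 ≤ x * y)
    (he : IsWeakUnit (1 : E))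
    (F : E →ₗ[ℝ] E) (hF : IsCondExp (1 : E) F)
    (Φ : Set (E →ₗ[ℝ] ℝ)) (hΦ : IsSeparatingFamily (1 : E) Φ)
    (X : ℕ → E) (P : ℕ → ℝ → (E →ₗ[ℝ] E))
    (hP : ∀ n (l : ℝ), IsProjOnBandGen (P n l) ((|X n| - l • (1 : E)) ⊔ 0))
    (hbdd : ∀ φ ∈ Φ, ∃ M : ℝ, ∀ n, qSemi F φ (X n) ≤ M)
    (hsmall : ∀ φ ∈ Φ, ∀ ε : ℝ, 0 < ε → ∃ l₀ : ℝ, ∀ l : ℝ, l₀ ≤ l → ∀ n,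
      qSemi F φ (P n l (1 : E)) < ε) :
    UnifInt F Φ X P := by
  have : IsOrderedAddMonoid E := { add_le_add_left := fun _ _ h c => add_le_add_left h c }
  have : ZeroLEOneClass E := ⟨he.1.le⟩
  have := IsOrderedRing.of_mul_nonneg hmul
  intro φ hφ ε hε
  obtain ⟨M, hM⟩ := hbdd φ hφ
  have hM0 : 0 ≤ M := (Real.sqrt_nonneg _).trans (hM 0)
  obtain ⟨l₀, hl₀⟩ := hsmall φ hφ (ε / (M + 1)) (by positivity)
  refine ⟨l₀, fun l hl n => ?_⟩
  calc φ (F (P n l |X n|)) ≤ qSemi F φ (P n l 1) * qSemi F φ (X n) :=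
        (hP n l).apply_abs_le_qSemi_mul_qSemi le_sup_right he hF (hΦ.1 φ hφ) (X n)
    _ ≤ ε / (M + 1) * M :=
        mul_le_mul (hl₀ l hl n).le (hM n) (Real.sqrt_nonneg _) (by positivity)
    _ < ε := by
        rw [div_mul_eq_mul_div, div_lt_iff₀ (by positivity)]
        nlinarith
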